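/- Let G be a graph, let OPT_H be a minimum vertex cover of H² where H is obtained from G by inserting a dangling path gadget (three new vertices p_e¹−p_e²−p_e³ with p_e¹ adjacent to the endpoints of e) into every edge e, and let m = |E(G)|. If C_H is a vertex cover of H² with |C_H| ≤ (1+ε)|OPT_H|, then C = C_H ∩ V(G) is a vertex cover of G with |C| ≤ OPT·(1 + ε(1 + 2m/OPT)), where OPT is the minimum vertex-cover size of G. -/

import Mathlib

open SimpleGraph

variable {V : Type*}

/-- The `r`-th power of a graph: distinct vertices are adjacent iff their
distance in `G` is at most `r` (i.e. there is a walk of length at most `r`). -/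
def graphPow (G : SimpleGraph V) (r : ℕ) : SimpleGraph V where
  Adj u v := u ≠ v ∧ ∃ p : G.Walk u v, p.length ≤ r
  symm := by
    constructor
    rintro u v ⟨h, p, hp⟩
    exact ⟨h.symm, p.reverse, by simpa using hp⟩
  loopless := by constructor; rintro u ⟨h, _⟩; exact h rfl

/-- `C` is a vertex cover of `H`. -/
def isVC (H : SimpleGraph V) (C : Finset V) : Prop :=
  ∀ ⦃u v : V⦄, H.Adj u v → u ∈ C ∨ v ∈ C

/-- `C` covers all edges of `H` with both endpoints in `W` (vertex cover of the
induced subgraph `H[W]`). -/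
def isVCOn (H : SimpleGraph V) (W : Finset V) (C : Finset V) : Prop :=
  ∀ ⦃u v : V⦄, u ∈ W → v ∈ W → H.Adj u v → u ∈ C ∨ v ∈ C
/-- The graph `H` obtained from `G` by replacing every edge `e = {u,v}` with a
dangling path gadget: three fresh vertices `(e,0) - (e,1) - (e,2)` forming a
path, with `(e,0)` additionally adjacent to both endpoints of `e`; the original
edge is deleted. -/
def gadgetGraph (G : SimpleGraph V) : SimpleGraph (V ⊕ (G.edgeSet × Fin 3)) where
  Adj x y :=
    match x, y with
    | Sum.inl _, Sum.inl _ => False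
    | Sum.inl u, Sum.inr (e, i) => i = 0 ∧ u ∈ (e : Sym2 V)
    | Sum.inr (e, i), Sum.inl u => i = 0 ∧ u ∈ (e : Sym2 V)
    | Sum.inr (e, i), Sum.inr (f, j) => e = f ∧ (i.val + 1 = j.val ∨ j.val + 1 = i.val)
  symm := by
    constructor
    rintro (u | ⟨e, i⟩) (v | ⟨f, j⟩) h <;> simp_all <;> tauto
  loopless := by
    constructor
    rintro (u | ⟨e, i⟩) h <;> simp_all

/-!
A vertex cover of `H²` must contain at least two of the three vertices of every gadget, since they
pairwise lie at distance at most 2; and the endpoints of an edge `uv` of `G` are at distance 2 in `H`,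
so `C_H` restricted to `V(G)` covers `G`. Conversely, an optimal cover of `G` together with the first
two vertices of every gadget covers `H²`, so `|OPT_H| ≤ OPT + 2m`. Hence
`|C| ≤ |C_H| - 2m ≤ (1 + ε)(OPT + 2m) - 2m = OPT (1 + ε (1 + 2m / OPT))`.
-/
section GraphSquare
variable {W : Type*} {H : SimpleGraph W}

lemma graphPow_two_adj {x y : W} :
    (graphPow H 2).Adj x y ↔ x ≠ y ∧ (H.Adj x y ∨ ∃ z, H.Adj x z ∧ H.Adj z y) := by
  constructor
  · rintro ⟨hne, p, hp⟩
    refine ⟨hne, ?_⟩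
    match p, hp with
    | .nil, _ => exact absurd rfl hne
    | .cons h .nil, _ => exact Or.inl h
    | .cons h (.cons h' .nil), _ => exact Or.inr ⟨_, h, h'⟩
  · rintro ⟨hne, h | ⟨z, h₁, h₂⟩⟩
    · exact ⟨hne, h.toWalk, by simp⟩
    · exact ⟨hne, .cons h₁ h₂.toWalk, by simp⟩

lemma isVC_graphPow_two {C : Finset W} (hC : isVC H C)
    (hpath : ∀ ⦃x z y⦄, x ≠ y → H.Adj x z → H.Adj z y → x ∈ C ∨ y ∈ C) :
    isVC (graphPow H 2) C := by
  intro x y hxy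
  obtain ⟨hne, hxy | ⟨z, hxz, hzy⟩⟩ := graphPow_two_adj.mp hxy
  · exact hC hxy
  · exact hpath hne hxz hzy

end GraphSquare

section Gadget
open Finset
variable {G : SimpleGraph V}

@[simp] lemma gadgetGraph_adj_inl_inl {u v : V} :
    ¬ (gadgetGraph G).Adj (Sum.inl u) (Sum.inl v) := id

@[simp] lemma gadgetGraph_adj_inl_inr {u : V} {e : G.edgeSet} {i : Fin 3} :
    (gadgetGraph G).Adj (Sum.inl u) (Sum.inr (e, i)) ↔ i = 0 ∧ u ∈ (e : Sym2 V) := Iff.rfl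

@[simp] lemma gadgetGraph_adj_inr_inl {u : V} {e : G.edgeSet} {i : Fin 3} :
    (gadgetGraph G).Adj (Sum.inr (e, i)) (Sum.inl u) ↔ i = 0 ∧ u ∈ (e : Sym2 V) := Iff.rfl

@[simp] lemma gadgetGraph_adj_inr_inr {e f : G.edgeSet} {i j : Fin 3} :
    (gadgetGraph G).Adj (Sum.inr (e, i)) (Sum.inr (f, j)) ↔
      e = f ∧ (i.val + 1 = j.val ∨ j.val + 1 = i.val) := Iff.rfl

lemma graphPow_two_gadgetGraph_adj_inl {u v : V} (huv : G.Adj u v) :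
    (graphPow (gadgetGraph G) 2).Adj (Sum.inl u) (Sum.inl v) :=
  graphPow_two_adj.mpr ⟨by simp [huv.ne], Or.inr ⟨Sum.inr (⟨s(u, v), huv⟩, 0), by simp, by simp⟩⟩

lemma graphPow_two_gadgetGraph_adj_inr {e : G.edgeSet} {i j : Fin 3} (hij : i ≠ j) :
    (graphPow (gadgetGraph G) 2).Adj (Sum.inr (e, i)) (Sum.inr (e, j)) := by
  refine graphPow_two_adj.mpr ⟨by simpa using hij, ?_⟩
  fin_cases i <;> fin_cases j <;>
    first
      | exact absurd rfl hij
      | exact Or.inl ⟨rfl, by decide⟩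
      | (right; exact ⟨Sum.inr (e, 1), by simp, by simp⟩)

lemma isVC_toLeft_of_graphPow_two_gadgetGraph {C : Finset (V ⊕ (G.edgeSet × Fin 3))}
    (hC : isVC (graphPow (gadgetGraph G) 2) C) : isVC G C.toLeft := fun _ _ huv => by
  simpa using hC (graphPow_two_gadgetGraph_adj_inl huv)

variable [Fintype V] [DecidableRel G.Adj]

/-- Two vertices of one gadget missed by `C` would be adjacent in the square, so the missed gadget
vertices inject into the edges of `G`. -/
lemma two_mul_card_edgeFinset_le_card_toRight {C : Finset (V ⊕ (G.edgeSet × Fin 3))}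
    (hC : isVC (graphPow (gadgetGraph G) 2) C) : 2 * #G.edgeFinset ≤ #C.toRight := by
  classical
  have hmiss : #C.toRightᶜ ≤ #(univ : Finset G.edgeSet) := by
    refine card_le_card_of_injOn Prod.fst (fun _ _ => mem_univ _) ?_
    rintro ⟨e, i⟩ hi ⟨f, j⟩ hj (rfl : e = f)
    obtain rfl | hij := eq_or_ne i j
    · rfl
    have := hC (graphPow_two_gadgetGraph_adj_inr (e := e) hij)
    simp_all
  have htotal := card_compl_add_card C.toRight
  rw [Fintype.card_prod, Fintype.card_fin] at htotal
  rw [card_univ] at hmiss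
  rw [edgeFinset_card]
  omega

def gadgetCover (C : Finset V) : Finset (V ⊕ (G.edgeSet × Fin 3)) :=
  C.disjSum (univ ×ˢ {0, 1})

@[simp] lemma inl_mem_gadgetCover {C : Finset V} {u : V} :
    Sum.inl u ∈ gadgetCover (G := G) C ↔ u ∈ C := inl_mem_disjSum

@[simp] lemma inr_mem_gadgetCover {C : Finset V} {e : G.edgeSet} {i : Fin 3} :
    Sum.inr (e, i) ∈ gadgetCover (G := G) C ↔ i ≠ 2 := by
  fin_cases i <;> simp [gadgetCover]

lemma card_gadgetCover (C : Finset V) : #(gadgetCover (G := G) C) = #C + 2 * #G.edgeFinset := by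
  simp [gadgetCover, card_disjSum, card_product, edgeFinset_card, mul_comm]

lemma isVC_graphPow_two_gadgetCover {C : Finset V} (hC : isVC G C) :
    isVC (graphPow (gadgetGraph G) 2) (gadgetCover C) := by
  refine isVC_graphPow_two ?_ ?_
  · rintro (u | ⟨e, i⟩) (v | ⟨f, j⟩) h <;> simp at h ⊢ <;> omega
  rintro (u | ⟨e, i⟩) (w | ⟨g, k⟩) (v | ⟨f, j⟩) hne hxz hzy <;> simp at hxz hzy ⊢
  case inl.inr.inl =>
    -- the common neighbour of two original vertices is the gadget of the edge joining them
    exact hC (G.adj_of_mem_incidenceSet (by simpa using hne) ⟨g.2, hxz.2⟩ ⟨g.2, hzy.2⟩)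
  all_goals simp_all
  all_goals omega

end Gadget

theorem stmt19_general [Fintype V] [DecidableEq V] (G : SimpleGraph V) [DecidableRel G.Adj]
    (ε : ℝ) (hε : 0 ≤ ε)
    (OPT : Finset V)
    (hOPTvc : isVC G OPT)
    (hOPTpos : 1 ≤ OPT.card)
    (OPTH : Finset (V ⊕ (G.edgeSet × Fin 3)))
    (hOPTHmin : ∀ C, isVC (graphPow (gadgetGraph G) 2) C → OPTH.card ≤ C.card)
    (CH : Finset (V ⊕ (G.edgeSet × Fin 3)))
    (hCH : isVC (graphPow (gadgetGraph G) 2) CH)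
    (hCHapx : (CH.card : ℝ) ≤ (1 + ε) * OPTH.card) :
    isVC G (Finset.univ.filter (fun v : V => Sum.inl v ∈ CH)) ∧
    ((Finset.univ.filter (fun v : V => Sum.inl v ∈ CH)).card : ℝ) ≤
      (OPT.card : ℝ) *
        (1 + ε * (1 + 2 * (G.edgeFinset.card : ℝ) / (OPT.card : ℝ))) := by
  have hC : Finset.univ.filter (fun v : V => Sum.inl v ∈ CH) = CH.toLeft := by ext; simp
  rw [hC]
  refine ⟨isVC_toLeft_of_graphPow_two_gadgetGraph hCH, ?_⟩
  have hCH_card : CH.toLeft.card + 2 * G.edgeFinset.card ≤ CH.card :=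
    Finset.card_toLeft_add_card_toRight (u := CH) ▸
      Nat.add_le_add_left (two_mul_card_edgeFinset_le_card_toRight hCH) _
  have hOPTH_card : OPTH.card ≤ OPT.card + 2 * G.edgeFinset.card :=
    card_gadgetCover (G := G) OPT ▸ hOPTHmin _ (isVC_graphPow_two_gadgetCover hOPTvc)
  have hOPT : (OPT.card : ℝ) ≠ 0 := by exact_mod_cast Nat.one_le_iff_ne_zero.mp hOPTpos
  calc (CH.toLeft.card : ℝ) ≤ CH.card - 2 * G.edgeFinset.card := by
        rw [le_sub_iff_add_le]; exact_mod_cast hCH_card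
    _ ≤ (1 + ε) * (OPT.card + 2 * G.edgeFinset.card) - 2 * G.edgeFinset.card := by
        gcongr
        exact hCHapx.trans (by gcongr; exact_mod_cast hOPTH_card)
    _ = OPT.card * (1 + ε * (1 + 2 * G.edgeFinset.card / OPT.card)) := by
        field_simp
        ring

theorem stmt19 [Fintype V] [DecidableEq V] (G : SimpleGraph V) [DecidableRel G.Adj]
    (ε : ℝ) (hε : 0 ≤ ε)
    (OPT : Finset V)
    (hOPTvc : isVC G OPT)
    (hOPTmin : ∀ C : Finset V, isVC G C → OPT.card ≤ C.card)
    (hOPTpos : 1 ≤ OPT.card)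
    (hm : 1 ≤ G.edgeFinset.card)
    (OPTH : Finset (V ⊕ (G.edgeSet × Fin 3)))
    (hOPTHvc : isVC (graphPow (gadgetGraph G) 2) OPTH)
    (hOPTHmin : ∀ C, isVC (graphPow (gadgetGraph G) 2) C → OPTH.card ≤ C.card)
    (CH : Finset (V ⊕ (G.edgeSet × Fin 3)))
    (hCH : isVC (graphPow (gadgetGraph G) 2) CH)
    (hCHapx : (CH.card : ℝ) ≤ (1 + ε) * OPTH.card) :
    isVC G (Finset.univ.filter (fun v : V => Sum.inl v ∈ CH)) ∧
    ((Finset.univ.filter (fun v : V => Sum.inl v ∈ CH)).card : ℝ) ≤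
      (OPT.card : ℝ) *
        (1 + ε * (1 + 2 * (G.edgeFinset.card : ℝ) / (OPT.card : ℝ))) :=
  stmt19_general G ε hε OPT hOPTvc hOPTpos OPTH hOPTHmin CH hCH hCHapx
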